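/- arXiv:1412.5213 — 2 statements merged into one kernel-verified Lean document; each statement's English description precedes it below -/
import Mathlib

section
/- Let n ≥ 2 and F : (Fin n → Bool) → Bool. Suppose there exist distinct indices i, j : Fin n and a function G : (Fin n → Bool) → Bool that does not depend on coordinates i and j (i.e. G q = G q' whenever q l = q' l for all l ∉ {i,j}) such that F q = xor (q i) (xor (q j) (G q)) for all q. Then the (n+1)-qubit balanced state ψ_F is strongly contextual for the measurements Y and Z at each party: there is no global assignment g : Fin (n+1) → M → Bool such that for every context c : Fin (n+1) → M the induced outcome has nonzero amplitude. -/
noncomputable section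

/-- Inner product of two `m`-qubit states `(Fin m → Bool) → ℂ`. -/
def inner' {m : ℕ} (φ ψ : (Fin m → Bool) → ℂ) : ℂ :=
  ∑ s : Fin m → Bool, (starRingEnd ℂ) (φ s) * ψ s

/-- Tensor product of local vectors. -/
def tensor {m : ℕ} (v : Fin m → Bool → ℂ) : (Fin m → Bool) → ℂ :=
  fun s => ∏ i, v i (s i)

/-- `Y`-measurement eigenvectors: `yvec false = (1/√2, i/√2)`,
`yvec true = (1/√2, -i/√2)`. -/
def yvec (b : Bool) : Bool → ℂ :=
  fun b' => if b' then (if b then -Complex.I else Complex.I) * (Real.sqrt 2 : ℂ)⁻¹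
    else (Real.sqrt 2 : ℂ)⁻¹

/-- `Z`-measurement eigenvectors. -/
def evec (b : Bool) : Bool → ℂ := fun b' => if b = b' then 1 else 0

/-- The measurement set: `Y` or `Z` at each site. -/
inductive M | Y | Z

/-- The eigenvector family of each measurement. -/
def mvec : M → Bool → Bool → ℂ
  | M.Y => yvec
  | M.Z => evec

/-- The amplitude of outcome `o` in context `c` for an `m`-qubit state `ψ`. -/
def amp {m : ℕ} (ψ : (Fin m → Bool) → ℂ) (c : Fin m → M) (o : Fin m → Bool) : ℂ :=
  inner' (tensor fun i => mvec (c i) (o i)) ψ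

/-- A global assignment is consistent if its induced outcome is possible in
every context. -/
def consistent {m : ℕ} (ψ : (Fin m → Bool) → ℂ) (g : Fin m → M → Bool) : Prop :=
  ∀ c : Fin m → M, amp ψ c (fun i => g i (c i)) ≠ 0

/-- The balanced `(n+1)`-qubit state with functional dependency `F`. -/
def psiF {n : ℕ} (F : (Fin n → Bool) → Bool) : (Fin (n + 1) → Bool) → ℂ :=
  fun s => if s (Fin.last n) = F (fun i => s i.castSucc)
    then (Real.sqrt (2 ^ n) : ℂ)⁻¹ else 0

/-! ### Auxiliary machinery -/

def snocEquiv (n : ℕ) : (Fin n → Bool) × Bool ≃ (Fin (n+1) → Bool) where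
  toFun p := Fin.snoc p.1 p.2
  invFun s := (fun k => s k.castSucc, s (Fin.last n))
  left_inv p := by
    ext k
    · simp
    · simp
  right_inv s := by
    change Fin.snoc (Fin.init s) (s (Fin.last n)) = s
    exact Fin.snoc_init_self s

lemma amp_psiF {n : ℕ} (F : (Fin n → Bool) → Bool) (c : Fin (n+1) → M) (o : Fin (n+1) → Bool) :
    amp (psiF F) c o =
      (∑ q : Fin n → Bool,
        (∏ k : Fin n, (starRingEnd ℂ) (mvec (c k.castSucc) (o k.castSucc) (q k))) *
          (starRingEnd ℂ) (mvec (c (Fin.last n)) (o (Fin.last n)) (F q))) *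
        (Real.sqrt (2 ^ n) : ℂ)⁻¹ := by
  unfold amp inner' tensor psiF
  rw [← Fintype.sum_equiv (snocEquiv n)
    (fun p => (starRingEnd ℂ) (∏ k, mvec (c k) ((snocEquiv n p) k |> fun _ => o k) ((snocEquiv n p) k)) *
      (if (snocEquiv n p) (Fin.last n) = F (fun k => (snocEquiv n p) k.castSucc) then (Real.sqrt (2 ^ n) : ℂ)⁻¹ else 0))
    _ (fun p => rfl)]
  rw [Fintype.sum_prod_type, Finset.sum_mul]
  refine Finset.sum_congr rfl fun q _ => ?_
  have hsnoc : ∀ x : Bool, ∀ k : Fin n, (snocEquiv n (q, x)) k.castSucc = q k := by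
    intro x k; simp [snocEquiv]
  have hlast : ∀ x : Bool, (snocEquiv n (q, x)) (Fin.last n) = x := by
    intro x; simp [snocEquiv]
  rw [Fintype.sum_bool]
  have hprod : ∀ x : Bool, (starRingEnd ℂ) (∏ k, mvec (c k) (o k) ((snocEquiv n (q, x)) k)) =
      (∏ k : Fin n, (starRingEnd ℂ) (mvec (c k.castSucc) (o k.castSucc) (q k))) *
        (starRingEnd ℂ) (mvec (c (Fin.last n)) (o (Fin.last n)) x) := by
    intro x
    rw [Fin.prod_univ_castSucc (f := fun k => mvec (c k) (o k) ((snocEquiv n (q, x)) k))]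
    simp only [hsnoc, hlast, map_mul, map_prod]
  rw [hprod, hprod]
  have hq : (fun k => (snocEquiv n (q, true)) k.castSucc) = q := funext (hsnoc true)
  have hq' : (fun k => (snocEquiv n (q, false)) k.castSucc) = q := funext (hsnoc false)
  rw [hlast, hlast, hq, hq']
  cases hFq : F q <;> simp [hFq, mul_assoc]

lemma sum_two_free {n : ℕ} (i j : Fin n) (hij : i ≠ j) (q0 : Fin n → Bool)
    (f : (Fin n → Bool) → ℂ)
    (hf : ∀ q : Fin n → Bool, (∃ l, l ≠ i ∧ l ≠ j ∧ q l ≠ q0 l) → f q = 0) :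
    ∑ q, f q = ∑ a : Bool, ∑ b : Bool,
      f (Function.update (Function.update q0 i a) j b) := by
  classical
  set e : Bool × Bool → (Fin n → Bool) :=
    fun p => Function.update (Function.update q0 i p.1) j p.2 with he
  have hei : ∀ p, e p i = p.1 := by
    intro p; simp [he, Function.update_of_ne hij]
  have hej : ∀ p, e p j = p.2 := by
    intro p; simp [he]
  have hel : ∀ p l, l ≠ i → l ≠ j → e p l = q0 l := by
    intro p l h1 h2
    simp [he, Function.update_of_ne h2, Function.update_of_ne h1]
  have hinj : Function.Injective e := by
    intro p p' h
    have h1 := congrFun h i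
    have h2 := congrFun h j
    rw [hei, hei] at h1; rw [hej, hej] at h2
    exact Prod.ext h1 h2
  have : ∑ q ∈ (Finset.univ.image e), f q = ∑ q, f q := by
    apply Finset.sum_subset (Finset.subset_univ _)
    intro q _ hq
    apply hf
    by_contra hc
    push_neg at hc
    apply hq
    rw [Finset.mem_image]
    refine ⟨(q i, q j), Finset.mem_univ _, ?_⟩
    funext l
    by_cases h1 : l = i
    · subst h1; exact hei _
    · by_cases h2 : l = j
      · subst h2; exact hej _
      · rw [hel _ _ h1 h2]; exact (hc l h1 h2).symm
  rw [← this, Finset.sum_image (fun p _ p' _ h => hinj h)]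
  rw [Fintype.sum_prod_type]

/-- The reduced two-site sum appearing in every amplitude. -/
def S (mi mj mL : M) (oi oj oL gv : Bool) : ℂ :=
  ∑ a : Bool, ∑ b : Bool,
    (starRingEnd ℂ) (mvec mi oi a) * (starRingEnd ℂ) (mvec mj oj b) *
      (starRingEnd ℂ) (mvec mL oL (Bool.xor a (Bool.xor b gv)))

lemma LA (oi oj oL gv : Bool) (h : S M.Z M.Z M.Z oi oj oL gv ≠ 0) :
    oL = Bool.xor oi (Bool.xor oj gv) := by
  by_contra hc
  apply h
  cases oi <;> cases oj <;> cases oL <;> cases gv <;>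
    first
      | exact absurd (by decide) hc
      | (simp [S, Fintype.sum_bool, mvec, evec, yvec] <;>
          first
            | ring1
            | linear_combination ((Real.sqrt 2:ℝ):ℂ)⁻¹ * ((Real.sqrt 2:ℝ):ℂ)⁻¹ * Complex.I_sq)

lemma LB (oi oj oL gv : Bool) (h : S M.Y M.Y M.Z oi oj oL gv ≠ 0) :
    Bool.xor oi oj = !(Bool.xor oL gv) := by
  by_contra hc
  apply h
  cases oi <;> cases oj <;> cases oL <;> cases gv <;>
    first
      | exact absurd (by decide) hc
      | (simp [S, Fintype.sum_bool, mvec, evec, yvec] <;>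
          first
            | ring1
            | linear_combination ((Real.sqrt 2:ℝ):ℂ)⁻¹ * ((Real.sqrt 2:ℝ):ℂ)⁻¹ * Complex.I_sq)

lemma LC (oi oj oL gv : Bool) (h : S M.Y M.Z M.Y oi oj oL gv ≠ 0) :
    Bool.xor oi oL = !(Bool.xor oj gv) := by
  by_contra hc
  apply h
  cases oi <;> cases oj <;> cases oL <;> cases gv <;>
    first
      | exact absurd (by decide) hc
      | (simp [S, Fintype.sum_bool, mvec, evec, yvec] <;>
          first
            | ring1
            | linear_combination ((Real.sqrt 2:ℝ):ℂ)⁻¹ * ((Real.sqrt 2:ℝ):ℂ)⁻¹ * Complex.I_sq)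

lemma LD (oi oj oL gv : Bool) (h : S M.Z M.Y M.Y oi oj oL gv ≠ 0) :
    Bool.xor oj oL = !(Bool.xor oi gv) := by
  by_contra hc
  apply h
  cases oi <;> cases oj <;> cases oL <;> cases gv <;>
    first
      | exact absurd (by decide) hc
      | (simp [S, Fintype.sum_bool, mvec, evec, yvec] <;>
          first
            | ring1
            | linear_combination ((Real.sqrt 2:ℝ):ℂ)⁻¹ * ((Real.sqrt 2:ℝ):ℂ)⁻¹ * Complex.I_sq)

lemma amp_eval {n : ℕ} (F : (Fin n → Bool) → Bool) (i j : Fin n) (hij : i ≠ j)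
    (G : (Fin n → Bool) → Bool)
    (hG : ∀ q q' : Fin n → Bool, (∀ l, l ≠ i → l ≠ j → q l = q' l) → G q = G q')
    (hF : ∀ q, F q = Bool.xor (q i) (Bool.xor (q j) (G q)))
    (c : Fin (n+1) → M) (o : Fin (n+1) → Bool)
    (hc : ∀ k : Fin n, k ≠ i → k ≠ j → c k.castSucc = M.Z) :
    amp (psiF F) c o =
      S (c i.castSucc) (c j.castSucc) (c (Fin.last n))
        (o i.castSucc) (o j.castSucc) (o (Fin.last n)) (G (fun k => o k.castSucc)) *
        (Real.sqrt (2 ^ n) : ℂ)⁻¹ := by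
  classical
  rw [amp_psiF]
  congr 1
  rw [sum_two_free i j hij (fun k => o k.castSucc) _ ?vanish]
  case vanish =>
    rintro q ⟨l, h1, h2, hne⟩
    apply mul_eq_zero_of_left
    apply Finset.prod_eq_zero (Finset.mem_univ l)
    rw [hc l h1 h2]
    simp only [mvec, evec]
    rw [if_neg (fun h => hne h.symm)]
    simp
  unfold S
  refine Finset.sum_congr rfl fun a _ => Finset.sum_congr rfl fun b _ => ?_
  set q := Function.update (Function.update (fun k => o k.castSucc) i a) j b with hqdef
  have hqi : q i = a := by
    simp [hqdef, Function.update_of_ne hij]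
  have hqj : q j = b := by simp [hqdef]
  have hql : ∀ l, l ≠ i → l ≠ j → q l = o l.castSucc := by
    intro l h1 h2
    simp [hqdef, Function.update_of_ne h2, Function.update_of_ne h1]
  have hGq : G q = G (fun k => o k.castSucc) := hG _ _ (fun l h1 h2 => hql l h1 h2)
  have hFq : F q = Bool.xor a (Bool.xor b (G fun k => o k.castSucc)) := by
    rw [hF, hqi, hqj, hGq]
  rw [hFq]
  congr 1
  rw [← Finset.prod_subset (Finset.subset_univ ({i, j} : Finset (Fin n))) ?ones]
  · rw [Finset.prod_pair hij, hqi, hqj]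
  case ones =>
    intro x _ hx
    simp only [Finset.mem_insert, Finset.mem_singleton, not_or] at hx
    rw [hc x hx.1 hx.2, hql x hx.1 hx.2]
    simp [mvec, evec]

/-- If `F q = q i ⊕ q j ⊕ G q` for distinct `i, j` and some `G` not depending on
coordinates `i` and `j`, then the balanced `(n+1)`-qubit state `ψ_F` is strongly
contextual for `Y`/`Z` measurements. -/
theorem xor_form_strongly_contextual (n : ℕ) (hn : 2 ≤ n)
    (F : (Fin n → Bool) → Bool) (i j : Fin n) (hij : i ≠ j)
    (G : (Fin n → Bool) → Bool)
    (hG : ∀ q q' : Fin n → Bool, (∀ l, l ≠ i → l ≠ j → q l = q' l) → G q = G q')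
    (hF : ∀ q, F q = Bool.xor (q i) (Bool.xor (q j) (G q))) :
    ¬ ∃ g : Fin (n + 1) → M → Bool, consistent (psiF F) g := by
  classical
  rintro ⟨g, hg⟩
  set i' := i.castSucc with hi'
  set j' := j.castSucc with hj'
  set L := Fin.last n with hL
  have hi'j' : i' ≠ j' := fun h => hij (Fin.castSucc_injective n h)
  have hi'L : i' ≠ L := (Fin.castSucc_lt_last i).ne
  have hj'L : j' ≠ L := (Fin.castSucc_lt_last j).ne
  set Gv := G (fun k => g k.castSucc M.Z) with hGv
  -- the four contexts
  set cA : Fin (n+1) → M := fun _ => M.Z with hcA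
  set cB : Fin (n+1) → M := fun k => if k = i' ∨ k = j' then M.Y else M.Z with hcB
  set cC : Fin (n+1) → M := fun k => if k = i' ∨ k = L then M.Y else M.Z with hcC
  set cD : Fin (n+1) → M := fun k => if k = j' ∨ k = L then M.Y else M.Z with hcD
  have castne : ∀ (k : Fin n) (l : Fin n), k ≠ l → k.castSucc ≠ l.castSucc :=
    fun k l h hh => h (Fin.castSucc_injective n hh)
  -- evaluation of contexts at non-special sites
  have hcAz : ∀ k : Fin n, k ≠ i → k ≠ j → cA k.castSucc = M.Z := fun _ _ _ => rfl
  have hcBz : ∀ k : Fin n, k ≠ i → k ≠ j → cB k.castSucc = M.Z := by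
    intro k h1 h2
    simp only [hcB]
    rw [if_neg]
    push_neg
    exact ⟨castne k i h1, castne k j h2⟩
  have hcCz : ∀ k : Fin n, k ≠ i → k ≠ j → cC k.castSucc = M.Z := by
    intro k h1 h2
    simp only [hcC]
    rw [if_neg]
    push_neg
    exact ⟨castne k i h1, (Fin.castSucc_lt_last k).ne⟩
  have hcDz : ∀ k : Fin n, k ≠ i → k ≠ j → cD k.castSucc = M.Z := by
    intro k h1 h2
    simp only [hcD]
    rw [if_neg]
    push_neg
    exact ⟨castne k j h2, (Fin.castSucc_lt_last k).ne⟩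
  -- values at the special sites
  have cAi : cA i' = M.Z := rfl
  have cAj : cA j' = M.Z := rfl
  have cAL : cA L = M.Z := rfl
  have cBi : cB i' = M.Y := by simp [hcB]
  have cBj : cB j' = M.Y := by simp [hcB]
  have cBL : cB L = M.Z := by
    simp only [hcB]; rw [if_neg]; push_neg; exact ⟨hi'L.symm, hj'L.symm⟩
  have cCi : cC i' = M.Y := by simp [hcC]
  have cCj : cC j' = M.Z := by
    simp only [hcC]; rw [if_neg]; push_neg; exact ⟨hi'j'.symm, hj'L⟩
  have cCL : cC L = M.Y := by simp [hcC]
  have cDi : cD i' = M.Z := by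
    simp only [hcD]; rw [if_neg]; push_neg; exact ⟨hi'j', hi'L⟩
  have cDj : cD j' = M.Y := by simp [hcD]
  have cDL : cD L = M.Y := by simp [hcD]
  -- the G-value is the same in all contexts
  have hGsame : ∀ c : Fin (n+1) → M, (∀ k : Fin n, k ≠ i → k ≠ j → c k.castSucc = M.Z) →
      G (fun k => g k.castSucc (c k.castSucc)) = Gv := by
    intro c hc
    apply hG
    intro l h1 h2
    rw [hc l h1 h2]
  -- extract the nonzero S's
  have key : ∀ c : Fin (n+1) → M, (∀ k : Fin n, k ≠ i → k ≠ j → c k.castSucc = M.Z) →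
      S (c i') (c j') (c L) (g i' (c i')) (g j' (c j')) (g L (c L)) Gv ≠ 0 := by
    intro c hc
    have h := hg c
    rw [amp_eval F i j hij G hG hF c _ hc] at h
    have h' := left_ne_zero_of_mul h
    rw [hGsame c hc] at h'
    exact h'
  have hA := key cA hcAz
  have hB := key cB hcBz
  have hC := key cC hcCz
  have hD := key cD hcDz
  simp only [cAi, cAj, cAL] at hA
  simp only [cBi, cBj, cBL] at hB
  simp only [cCi, cCj, cCL] at hC
  simp only [cDi, cDj, cDL] at hD
  have eA := LA _ _ _ _ hA
  have eB := LB _ _ _ _ hB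
  have eC := LC _ _ _ _ hC
  have eD := LD _ _ _ _ hD
  revert eA eB eC eD
  generalize g i' M.Z = zi
  generalize g j' M.Z = zj
  generalize g L M.Z = zL
  generalize g i' M.Y = yi
  generalize g j' M.Y = yj
  generalize g L M.Y = yL
  generalize Gv = gv
  revert zi zj zL yi yj yL gv
  decide
end
end

section
/- Let n ≥ 2 and F : (Fin n → Bool) → Bool. Suppose F has degree at least two: there exist distinct indices i, j : Fin n and an assignment r : Fin n → Bool of the remaining variables such that xor (F r₀₀) (xor (F r₁₀) (xor (F r₀₁) (F r₁₁))) = true, where r_{ab} denotes r updated with value a at i and b at j (a,b ∈ {false,true} encoding 0,1). Suppose also that F is not of the form F q = xor (q i') (xor (q j') (G q)) for any distinct i', j' and any G not depending on coordinates i', j'. Then the (n+1)-qubit balanced state ψ_F admits a logical contextuality witness for the measurements Y and Z at each party: there exist a context c : Fin (n+1) → M and an outcome o with nonzero amplitude in c such that no consistent global assignment g satisfies g i (c i) = o i for all i. -/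
noncomputable section

open Function

/- ### Auxiliary lemmas -/

lemma keyBool : ∀ f : Bool → Bool → Bool,
    Bool.xor (f false false) (Bool.xor (f true false)
      (Bool.xor (f false true) (f true true))) = true →
    ∃ a b γ, f a b = !γ ∧ (∀ a' b', f a' b' = !γ → a' = a ∧ b' = b) ∧
      f true b = !(f false b) ∧ f a true = !(f a false) := by decide

lemma conj_yvec_ne (b b' : Bool) : (starRingEnd ℂ) (yvec b b') ≠ 0 := by
  have h2 : (Real.sqrt 2 : ℂ) ≠ 0 := by
    simp [Complex.ofReal_ne_zero, Real.sqrt_ne_zero']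
  cases b <;> cases b' <;>
    simp [yvec, h2, Complex.I_ne_zero]

lemma pair_sum_zero (y η F0 : Bool) (h : Bool.xor y η = F0) :
    (starRingEnd ℂ) (yvec y false) * (starRingEnd ℂ) (yvec η F0)
    + (starRingEnd ℂ) (yvec y true) * (starRingEnd ℂ) (yvec η (!F0)) = 0 := by
  subst h
  cases y <;> cases η <;>
    simp [yvec, map_mul, map_inv₀, Complex.conj_ofReal] <;>
    ring_nf <;> simp [Complex.I_sq]

lemma amp_split {n : ℕ} (F : (Fin n → Bool) → Bool) (c : Fin (n+1) → M) (o : Fin (n+1) → Bool) :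
    amp (psiF F) c o = (Real.sqrt (2 ^ n) : ℂ)⁻¹ *
      ∑ q : Fin n → Bool,
        (∏ l : Fin n, (starRingEnd ℂ) (mvec (c l.castSucc) (o l.castSucc) (q l))) *
        (starRingEnd ℂ) (mvec (c (Fin.last n)) (o (Fin.last n)) (F q)) := by
  unfold amp inner' tensor psiF
  rw [← Equiv.sum_comp (Fin.snocEquiv (fun _ : Fin (n+1) => Bool))]
  rw [Fintype.sum_prod_type_right]
  have : ∀ (q : Fin n → Bool) (b : Bool),
      (starRingEnd ℂ) (∏ i : Fin (n+1),
          mvec (c i) (o i) ((Fin.snocEquiv (fun _ => Bool)) (b, q) i)) *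
        (if (Fin.snocEquiv (fun _ => Bool)) (b, q) (Fin.last n)
            = F (fun i => (Fin.snocEquiv (fun _ => Bool)) (b, q) i.castSucc)
          then (Real.sqrt (2 ^ n) : ℂ)⁻¹ else 0)
      = ((∏ l : Fin n, (starRingEnd ℂ) (mvec (c l.castSucc) (o l.castSucc) (q l))) *
          (starRingEnd ℂ) (mvec (c (Fin.last n)) (o (Fin.last n)) b)) *
        (if b = F q then (Real.sqrt (2 ^ n) : ℂ)⁻¹ else 0) := by
    intro q b
    simp only [Fin.snocEquiv_apply, Fin.snoc_last, Fin.snoc_castSucc]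
    rw [Fin.prod_univ_castSucc, map_mul, map_prod]
    simp
  simp only [this]
  simp only [Finset.sum_ite_eq', Finset.mem_univ, if_true, mul_ite, mul_zero]
  rw [Finset.mul_sum]
  congr 1; funext q; ring

lemma sum_collapse_one {n : ℕ} (z : Fin n → Bool) (i : Fin n) (f : (Fin n → Bool) → ℂ)
    (h : ∀ q : Fin n → Bool, (∃ l, l ≠ i ∧ q l ≠ z l) → f q = 0) :
    ∑ q : Fin n → Bool, f q = f (update z i false) + f (update z i true) := by
  have hne : update z i false ≠ update z i true := by
    intro hq
    have := congrFun hq i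
    simp at this
  have hsub : ({update z i false, update z i true} : Finset (Fin n → Bool)) ⊆ Finset.univ :=
    Finset.subset_univ _
  rw [← Finset.sum_subset hsub, Finset.sum_pair hne]
  intro q _ hq
  apply h
  by_contra hc
  push_neg at hc
  apply hq
  have hq' : q = update z i (q i) := by
    funext l
    by_cases hl : l = i
    · subst hl; simp
    · rw [update_of_ne hl]; exact hc l hl
  simp only [Finset.mem_insert, Finset.mem_singleton]
  cases hqi : q i
  · left; rw [hq', hqi]
  · right; rw [hq', hqi]

lemma sum_collapse_two {n : ℕ} (z : Fin n → Bool) (i j : Fin n) (hij : i ≠ j)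
    (f : (Fin n → Bool) → ℂ)
    (h : ∀ q : Fin n → Bool, (∃ l, l ≠ i ∧ l ≠ j ∧ q l ≠ z l) → f q = 0) :
    ∑ q : Fin n → Bool, f q
      = ∑ p : Bool × Bool, f (update (update z i p.1) j p.2) := by
  have hinj : Function.Injective (fun p : Bool × Bool => update (update z i p.1) j p.2) := by
    intro p p' hp
    have h1 := congrFun hp i
    have h2 := congrFun hp j
    simp [update_of_ne hij, update_of_ne (Ne.symm hij)] at h1 h2
    exact Prod.ext h1 h2
  rw [← Finset.sum_image (s := (Finset.univ : Finset (Bool × Bool)))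
    (g := fun p : Bool × Bool => update (update z i p.1) j p.2) (f := f)
    (fun p _ p' _ hpp => hinj hpp)]
  apply (Finset.sum_subset (Finset.subset_univ _) _).symm
  intro q _ hq
  apply h
  by_contra hc
  push_neg at hc
  apply hq
  simp only [Finset.mem_image, Finset.mem_univ, true_and]
  refine ⟨(q i, q j), ?_⟩
  funext l
  by_cases hl : l = j
  · subst hl; simp
  · rw [update_of_ne hl]
    by_cases hl' : l = i
    · subst hl'; simp
    · rw [update_of_ne hl']; exact (hc l hl' hl).symm

/-- If `F` has degree at least two (witnessed by indices `i ≠ j` and an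
assignment `r` of the remaining variables at which the second mixed difference
of `F` is `1`) and `F` is not of the form `q i' ⊕ q j' ⊕ G q` with `G`
independent of coordinates `i'` and `j'`, then `ψ_F` admits a logical
contextuality witness for `Y`/`Z` measurements. -/
theorem degree_two_logical_contextuality_witness (n : ℕ) (hn : 2 ≤ n)
    (F : (Fin n → Bool) → Bool)
    (hdeg : ∃ (i j : Fin n) (r : Fin n → Bool), i ≠ j ∧
      Bool.xor (F (Function.update (Function.update r i false) j false))
        (Bool.xor (F (Function.update (Function.update r i true) j false))
          (Bool.xor (F (Function.update (Function.update r i false) j true))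
            (F (Function.update (Function.update r i true) j true)))) = true)
    (hnotxor : ¬ ∃ (i' j' : Fin n) (G : (Fin n → Bool) → Bool), i' ≠ j' ∧
      (∀ q q' : Fin n → Bool, (∀ l, l ≠ i' → l ≠ j' → q l = q' l) → G q = G q') ∧
      ∀ q, F q = Bool.xor (q i') (Bool.xor (q j') (G q))) :
    ∃ (c : Fin (n + 1) → M) (o : Fin (n + 1) → Bool),
      amp (psiF F) c o ≠ 0 ∧
      ∀ g : Fin (n + 1) → M → Bool, consistent (psiF F) g →
        ¬ ∀ k, g k (c k) = o k := by
  clear hn hnotxor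
  obtain ⟨i, j, r, hij, hpar⟩ := hdeg
  obtain ⟨a, b, γ, hfab, huniq, hfi, hfj⟩ :=
    keyBool (fun a b => F (update (update r i a) j b)) hpar
  -- base point z
  set z : Fin n → Bool := update (update r i a) j b with hzdef
  have hzl : ∀ l, l ≠ i → l ≠ j → z l = r l := by
    intro l hi hj
    rw [hzdef, update_of_ne hj, update_of_ne hi]
  have hzi : z i = a := by rw [hzdef, update_of_ne hij, update_self]
  have hzj : z j = b := by rw [hzdef, update_self]
  have hu1 : ∀ a', update z i a' = update (update r i a') j b := by
    intro a'
    funext l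
    by_cases hl : l = i
    · subst hl; rw [update_self, update_of_ne hij, update_self]
    · rw [update_of_ne hl]
      by_cases hl2 : l = j
      · subst hl2; rw [update_self, hzj]
      · rw [update_of_ne hl2, update_of_ne hl, hzl l hl hl2]
  have hu2 : ∀ b', update z j b' = update (update r i a) j b' := by
    intro b'
    rw [hzdef, Function.update_idem]
  have hu12 : ∀ x y, update (update z i x) j y = update (update r i x) j y := by
    intro x y
    rw [hu1 x, Function.update_idem]
  -- Fin facts
  have hii' : i.castSucc ≠ j.castSucc := fun h => hij (Fin.castSucc_inj.mp h)
  have hilst : i.castSucc ≠ Fin.last n := (Fin.castSucc_lt_last i).ne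
  have hjlst : j.castSucc ≠ Fin.last n := (Fin.castSucc_lt_last j).ne
  have hC : ((Real.sqrt (2 ^ n) : ℂ))⁻¹ ≠ 0 := by
    refine inv_ne_zero (Complex.ofReal_ne_zero.mpr ?_)
    positivity
  -- the witness context and outcome
  set F0 : Bool := F (update (update r i false) j b) with hF0def
  set F1 : Bool := F (update (update r i a) j false) with hF1def
  set cstar : Fin (n+1) → M :=
    update (update (fun _ => M.Z) i.castSucc M.Y) j.castSucc M.Y with hcstar
  set ostar : Fin (n+1) → Bool :=
    Fin.snoc (update (update z i false) j (!(Bool.xor F0 F1))) (!γ) with hostar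
  have hcstari : cstar i.castSucc = M.Y := by
    rw [hcstar, update_of_ne hii', update_self]
  have hcstarj : cstar j.castSucc = M.Y := by rw [hcstar, update_self]
  have hcstarlst : cstar (Fin.last n) = M.Z := by
    rw [hcstar, update_of_ne (Ne.symm hjlst), update_of_ne (Ne.symm hilst)]
  have hcstarl : ∀ l : Fin n, l ≠ i → l ≠ j → cstar l.castSucc = M.Z := by
    intro l hli hlj
    rw [hcstar, update_of_ne (fun h => hlj (Fin.castSucc_inj.mp h)),
      update_of_ne (fun h => hli (Fin.castSucc_inj.mp h))]
  have hostari : ostar i.castSucc = false := by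
    rw [hostar, Fin.snoc_castSucc, update_of_ne hij, update_self]
  have hostarj : ostar j.castSucc = !(Bool.xor F0 F1) := by
    rw [hostar, Fin.snoc_castSucc, update_self]
  have hostarlst : ostar (Fin.last n) = !γ := by rw [hostar, Fin.snoc_last]
  have hostarl : ∀ l : Fin n, l ≠ i → l ≠ j → ostar l.castSucc = z l := by
    intro l hli hlj
    rw [hostar, Fin.snoc_castSucc, update_of_ne hlj, update_of_ne hli]
  refine ⟨cstar, ostar, ?_, ?_⟩
  · -- the witness outcome is possible
    rw [amp_split]
    refine mul_ne_zero hC ?_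
    rw [sum_collapse_two z i j hij _ ?van]
    case van =>
      intro q ⟨l, hli, hlj, hql⟩
      refine mul_eq_zero_of_left (Finset.prod_eq_zero (Finset.mem_univ l) ?_) _
      rw [hcstarl l hli hlj, hostarl l hli hlj]
      show (starRingEnd ℂ) (evec (z l) (q l)) = 0
      rw [evec, if_neg (fun h => hql h.symm), map_zero]
    rw [Fintype.sum_eq_single ((a, b) : Bool × Bool) ?others]
    case others =>
      intro p hp
      refine mul_eq_zero_of_right _ ?_
      rw [hcstarlst, hostarlst, hu12]
      show (starRingEnd ℂ) (evec (!γ) (F (update (update r i p.1) j p.2))) = 0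
      rw [evec, if_neg, map_zero]
      intro h
      exact hp (Prod.ext (huniq p.1 p.2 h.symm).1 (huniq p.1 p.2 h.symm).2)
    · have hzz : update (update z i a) j b = z := by
        rw [hu12, ← hzdef]
      rw [hzz]
      refine mul_ne_zero ?_ ?_
      · rw [Finset.prod_ne_zero_iff]
        intro l _
        by_cases hli : l = i
        · subst hli; rw [hcstari]; exact conj_yvec_ne _ _
        · by_cases hlj : l = j
          · subst hlj; rw [hcstarj]; exact conj_yvec_ne _ _
          · rw [hcstarl l hli hlj, hostarl l hli hlj]
            show (starRingEnd ℂ) (evec (z l) (z l)) ≠ 0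
            rw [evec, if_pos rfl, map_one]
            exact one_ne_zero
      · rw [hcstarlst, hostarlst]
        show (starRingEnd ℂ) (evec (!γ) (F z)) ≠ 0
        rw [hzdef, hfab, evec, if_pos rfl, map_one]
        exact one_ne_zero
  · -- no consistent global assignment matches
    intro g hcons hmatch
    -- values of g
    have hgZ : ∀ l : Fin n, l ≠ i → l ≠ j → g l.castSucc M.Z = z l := by
      intro l hli hlj
      have h := hmatch l.castSucc
      rwa [hcstarl l hli hlj, hostarl l hli hlj] at h
    have hglast : g (Fin.last n) M.Z = !γ := by
      have h := hmatch (Fin.last n)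
      rwa [hcstarlst, hostarlst] at h
    have hyi : g i.castSucc M.Y = false := by
      have h := hmatch i.castSucc
      rwa [hcstari, hostari] at h
    have hyj : g j.castSucc M.Y = !(Bool.xor F0 F1) := by
      have h := hmatch j.castSucc
      rwa [hcstarj, hostarj] at h
    -- Step A: all-Z context pins down the Z-outcomes
    have hζ : ∀ l : Fin n, g l.castSucc M.Z = z l := by
      have hA := hcons (fun _ => M.Z)
      rw [amp_split] at hA
      rw [Fintype.sum_eq_single (fun l : Fin n => g l.castSucc M.Z) ?vanA] at hA
      case vanA =>
        intro q hq
        obtain ⟨l, hl⟩ := Function.ne_iff.mp hq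
        refine mul_eq_zero_of_left (Finset.prod_eq_zero (Finset.mem_univ l) ?_) _
        show (starRingEnd ℂ) (evec (g l.castSucc M.Z) (q l)) = 0
        rw [evec, if_neg (fun h => hl h.symm), map_zero]
      have hFζ : F (fun l => g l.castSucc M.Z) = !γ := by
        by_contra hF
        apply hA
        refine mul_eq_zero_of_right _ (mul_eq_zero_of_right _ ?_)
        show (starRingEnd ℂ) (evec (g (Fin.last n) M.Z) (F (fun l => g l.castSucc M.Z))) = 0
        rw [hglast, evec, if_neg (fun h => hF h.symm), map_zero]
      have hζz : (fun l : Fin n => g l.castSucc M.Z)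
          = update (update r i (g i.castSucc M.Z)) j (g j.castSucc M.Z) := by
        funext l
        by_cases hlj : l = j
        · subst hlj; rw [update_self]
        · rw [update_of_ne hlj]
          by_cases hli : l = i
          · subst hli; rw [update_self]
          · rw [update_of_ne hli, ← hzl l hli hlj]
            exact hgZ l hli hlj
      rw [hζz] at hFζ
      obtain ⟨hia, hjb⟩ := huniq _ _ hFζ
      intro l
      by_cases hlj : l = j
      · have hcj := congrFun hζz j
        rw [update_self] at hcj
        rw [hlj, hcj, hjb, hzj]
      · by_cases hli : l = i
        · have hci := congrFun hζz i
          rw [update_of_ne hij, update_self] at hci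
          rw [hli, hci, hia, hzi]
        · exact hgZ l hli hlj
    -- Step B: context with Y at i and at last
    have hxi : Bool.xor (g i.castSucc M.Y) (g (Fin.last n) M.Y) = !F0 := by
      set ci : Fin (n+1) → M :=
        update (update (fun _ => M.Z) i.castSucc M.Y) (Fin.last n) M.Y with hcidef
      have hcii : ci i.castSucc = M.Y := by
        rw [hcidef, update_of_ne hilst, update_self]
      have hcil : ci (Fin.last n) = M.Y := by rw [hcidef, update_self]
      have hciz : ∀ l : Fin n, l ≠ i → ci l.castSucc = M.Z := by
        intro l hli
        rw [hcidef, update_of_ne (Fin.castSucc_lt_last l).ne,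
          update_of_ne (fun h => hli (Fin.castSucc_inj.mp h))]
      have hB := hcons ci
      rw [amp_split] at hB
      rw [sum_collapse_one z i _ ?vanB] at hB
      case vanB =>
        intro q ⟨l, hli, hql⟩
        refine mul_eq_zero_of_left (Finset.prod_eq_zero (Finset.mem_univ l) ?_) _
        rw [hciz l hli]
        show (starRingEnd ℂ) (evec (g l.castSucc M.Z) (q l)) = 0
        rw [hζ l, evec, if_neg (fun h => hql h.symm), map_zero]
      have hprod : ∀ a' : Bool,
          (∏ l : Fin n, (starRingEnd ℂ)
            (mvec (ci l.castSucc) (g l.castSucc (ci l.castSucc)) (update z i a' l)))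
          = (starRingEnd ℂ) (yvec (g i.castSucc M.Y) a') := by
        intro a'
        rw [Finset.prod_eq_single i]
        · rw [hcii, update_self]
          rfl
        · intro l _ hli
          rw [hciz l hli, update_of_ne hli]
          show (starRingEnd ℂ) (evec (g l.castSucc M.Z) (z l)) = 1
          rw [hζ l, evec, if_pos rfl, map_one]
        · intro h
          exact absurd (Finset.mem_univ i) h
      rw [hprod false, hprod true, hcil] at hB
      simp only [hu1, ← hF0def, hfi] at hB
      have hS : (starRingEnd ℂ) (yvec (g i.castSucc M.Y) false) *
            (starRingEnd ℂ) (yvec (g (Fin.last n) M.Y) F0)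
          + (starRingEnd ℂ) (yvec (g i.castSucc M.Y) true) *
            (starRingEnd ℂ) (yvec (g (Fin.last n) M.Y) (!F0)) ≠ 0 := by
        intro h
        apply hB
        simp only [mvec]
        rw [h, mul_zero]
      by_contra hne
      have : Bool.xor (g i.castSucc M.Y) (g (Fin.last n) M.Y) = F0 := by
        revert hne
        cases Bool.xor (g i.castSucc M.Y) (g (Fin.last n) M.Y) <;> cases F0 <;> simp
      exact hS (pair_sum_zero _ _ _ this)
    -- Step C: context with Y at j and at last
    have hxj : Bool.xor (g j.castSucc M.Y) (g (Fin.last n) M.Y) = !F1 := by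
      set cj : Fin (n+1) → M :=
        update (update (fun _ => M.Z) j.castSucc M.Y) (Fin.last n) M.Y with hcjdef
      have hcjj : cj j.castSucc = M.Y := by
        rw [hcjdef, update_of_ne hjlst, update_self]
      have hcjl : cj (Fin.last n) = M.Y := by rw [hcjdef, update_self]
      have hcjz : ∀ l : Fin n, l ≠ j → cj l.castSucc = M.Z := by
        intro l hlj
        rw [hcjdef, update_of_ne (Fin.castSucc_lt_last l).ne,
          update_of_ne (fun h => hlj (Fin.castSucc_inj.mp h))]
      have hB := hcons cj
      rw [amp_split] at hB
      rw [sum_collapse_one z j _ ?vanC] at hB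
      case vanC =>
        intro q ⟨l, hlj, hql⟩
        refine mul_eq_zero_of_left (Finset.prod_eq_zero (Finset.mem_univ l) ?_) _
        rw [hcjz l hlj]
        show (starRingEnd ℂ) (evec (g l.castSucc M.Z) (q l)) = 0
        rw [hζ l, evec, if_neg (fun h => hql h.symm), map_zero]
      have hprod : ∀ b' : Bool,
          (∏ l : Fin n, (starRingEnd ℂ)
            (mvec (cj l.castSucc) (g l.castSucc (cj l.castSucc)) (update z j b' l)))
          = (starRingEnd ℂ) (yvec (g j.castSucc M.Y) b') := by
        intro b'
        rw [Finset.prod_eq_single j]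
        · rw [hcjj, update_self]
          rfl
        · intro l _ hlj
          rw [hcjz l hlj, update_of_ne hlj]
          show (starRingEnd ℂ) (evec (g l.castSucc M.Z) (z l)) = 1
          rw [hζ l, evec, if_pos rfl, map_one]
        · intro h
          exact absurd (Finset.mem_univ j) h
      rw [hprod false, hprod true, hcjl] at hB
      simp only [hu2, ← hF1def, hfj] at hB
      have hS : (starRingEnd ℂ) (yvec (g j.castSucc M.Y) false) *
            (starRingEnd ℂ) (yvec (g (Fin.last n) M.Y) F1)
          + (starRingEnd ℂ) (yvec (g j.castSucc M.Y) true) *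
            (starRingEnd ℂ) (yvec (g (Fin.last n) M.Y) (!F1)) ≠ 0 := by
        intro h
        apply hB
        simp only [mvec]
        rw [h, mul_zero]
      by_contra hne
      have : Bool.xor (g j.castSucc M.Y) (g (Fin.last n) M.Y) = F1 := by
        revert hne
        cases Bool.xor (g j.castSucc M.Y) (g (Fin.last n) M.Y) <;> cases F1 <;> simp
      exact hS (pair_sum_zero _ _ _ this)
    -- final Boolean contradiction
    rw [hyi] at hxi
    rw [hyj] at hxj
    revert hxi hxj
    cases F0 <;> cases F1 <;> cases (g (Fin.last n) M.Y) <;> decide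
end
end
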